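/- Let Φ be of type G₂ and P_k Kostant's partition function. For every λ = aω₁ + bω₂ with a ≥ 1 and 0 ≤ b ≤ 2, ∑_{u ∈ W} (−1)^{ℓ(u)} P_{a+b−1}(u·λ − ω₁) = ⌈a/3⌉. -/

import Mathlib

noncomputable section

/-- the weight space of `G₂`, in coordinates with respect to the simple roots `α₁, α₂`
(`α₁` short) -/
abbrev VG := Fin 2 → ℚ

/-- The six positive roots of `G₂`: `α₁, α₂, α₁+α₂, 2α₁+α₂, 3α₁+α₂, 3α₁+2α₂`. -/
def posG : Finset VG := {![1, 0], ![0, 1], ![1, 1], ![2, 1], ![3, 1], ![3, 2]}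

/-- Kostant's partition function: the number of ways (as unordered multisets) to write `ν`
as a sum of exactly `k` positive roots. -/
def PG (k : ℕ) (ν : VG) : ℕ :=
  Set.ncard {m : Multiset VG | Multiset.card m = k ∧ (∀ x ∈ m, x ∈ posG) ∧ m.sum = ν}

/-- the Cartan matrix of `G₂` (`α₁` short); the `(i,j)` entry is `⟨α_j, α_i^∨⟩` -/
def CG : Matrix (Fin 2) (Fin 2) ℚ := !![2, -3; -1, 2]

/-- the simple reflection `s_i` acting on the weight space:
`s_i(x) = x - ⟨x, α_i^∨⟩ α_i` -/
def sG (i : Fin 2) : VG → VG := fun x => x - (∑ j, x j * CG i j) • (Pi.single i 1 : VG)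

/-- the fundamental weight `ω₁ = 2α₁ + α₂` -/
def ω₁G : VG := ![2, 1]

/-- the fundamental weight `ω₂ = 3α₁ + 2α₂` -/
def ω₂G : VG := ![3, 2]

/-- the half-sum `ρ` of the positive roots -/
def ρG : VG := (2 : ℚ)⁻¹ • ∑ α ∈ posG, α

/-- the composite of the simple reflections listed in `l` -/
def compG (l : List (Fin 2)) : VG → VG := (l.map sG).foldr (· ∘ ·) id

/-- the length of a Weyl group element: the minimal length of a word in the simple
reflections representing it -/
def lenG (u : VG → VG) : ℕ := sInf {m | ∃ l : List (Fin 2), l.length = m ∧ u = compG l}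

open Finset Matrix

/-!
Only four Weyl group elements contribute: for `u ∉ {1, s₁, s₂, s₁s₂}` the weight `u·λ - ω₁` has
a negative coordinate once `b ≤ 2`. In each of the four remaining terms, every way of writing the
weight as a sum of `a + b - 1` positive roots uses one particular root at least `b` times (a linear
form that is at most `1` on all the other positive roots detects it), which removes `b`. Writing
`a = n + 1`, what is left is an alternating sum of four counts of lattice points; shifting a
coordinate matches all of them except the solutions of `x + 3y = n`, of which there are
`⌊n/3⌋ + 1 = ⌈a/3⌉`.
-/

section WeylGroup

def reflMat : Fin 2 → Matrix (Fin 2) (Fin 2) ℤ := ![!![-1, 3; 0, 1], !![1, 0; 1, -1]]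

def wordMat (l : List (Fin 2)) : Matrix (Fin 2) (Fin 2) ℤ := (l.map reflMat).prod

def actG (M : Matrix (Fin 2) (Fin 2) ℤ) (x : VG) : VG := (Int.castRingHom ℚ).mapMatrix M *ᵥ x

lemma actG_one : actG 1 = id := by
  funext x
  simp [actG]

lemma actG_mul (A B : Matrix (Fin 2) (Fin 2) ℤ) : actG (A * B) = actG A ∘ actG B := by
  funext x
  simp only [actG, map_mul, Function.comp_apply, Matrix.mulVec_mulVec]

lemma actG_injective : Function.Injective actG := by
  intro A B h
  apply Matrix.map_injective (Int.cast_injective (α := ℚ))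
  ext i j
  simpa [actG, Matrix.mulVec_single_one] using congrFun (congrFun h (Pi.single j 1)) i

lemma sG_eq_actG (i : Fin 2) : sG i = actG (reflMat i) := by
  funext x j
  fin_cases i <;> fin_cases j <;>
    simp [sG, CG, actG, reflMat, Fin.sum_univ_two] <;> ring

lemma compG_eq_actG (l : List (Fin 2)) : compG l = actG (wordMat l) := by
  induction l with
  | nil => exact actG_one.symm
  | cons i l ih =>
    change sG i ∘ compG l = _
    rw [ih, sG_eq_actG, ← actG_mul]
    rfl

lemma det_wordMat (l : List (Fin 2)) : (wordMat l).det = (-1) ^ l.length := by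
  induction l with
  | nil => simp [wordMat]
  | cons i l ih =>
    rw [wordMat, List.map_cons, List.prod_cons, Matrix.det_mul, ← wordMat, ih, List.length_cons,
      pow_succ']
    fin_cases i <;> simp [reflMat, Matrix.det_fin_two]

lemma neg_one_pow_lenG_compG (l : List (Fin 2)) :
    (-1 : ℤ) ^ lenG (compG l) = (wordMat l).det := by
  obtain ⟨l', hl', hll'⟩ :
      sInf {m | ∃ l' : List (Fin 2), l'.length = m ∧ compG l = compG l'} ∈ _ :=
    Nat.sInf_mem ⟨_, l, rfl, rfl⟩
  rw [compG_eq_actG, compG_eq_actG] at hll'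
  rw [lenG, ← hl', ← det_wordMat, actG_injective hll']

/-- One word for each of the twelve elements of `W`. -/
def weylWords : List (List (Fin 2)) :=
  [[], [0], [1], [0, 1], [1, 0], [0, 1, 0], [1, 0, 1], [1, 0, 1, 0], [0, 1, 0, 1], [0, 1, 0, 1, 0],
    [1, 0, 1, 0, 1], [1, 0, 1, 0, 1, 0]]

lemma exists_mem_weylWords_wordMat_eq (l : List (Fin 2)) :
    ∃ w ∈ weylWords, wordMat w = wordMat l := by
  induction l with
  | nil => exact ⟨[], by simp [weylWords], rfl⟩
  | cons i l ih =>
    obtain ⟨w, hw, hwl⟩ := ih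
    have hclosed : ∀ i, ∀ w ∈ weylWords, ∃ w' ∈ weylWords, wordMat w' = reflMat i * wordMat w := by
      decide
    obtain ⟨w', hw', hw'w⟩ := hclosed i w hw
    exact ⟨w', hw', by rw [hw'w, hwl]; rfl⟩

lemma sum_eq_sum_weylWords (W : Finset (VG → VG)) (hW : ∀ u, u ∈ W ↔ ∃ l, u = compG l)
    (f : (VG → VG) → ℤ) : ∑ u ∈ W, f u = (weylWords.map fun l => f (compG l)).sum := by
  classical
  have hW' : W = (weylWords.map compG).toFinset := by
    ext u
    rw [hW, List.mem_toFinset, List.mem_map]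
    constructor
    · rintro ⟨l, rfl⟩
      obtain ⟨w, hw, hwl⟩ := exists_mem_weylWords_wordMat_eq l
      exact ⟨w, hw, by rw [compG_eq_actG, compG_eq_actG, hwl]⟩
    · rintro ⟨w, -, rfl⟩
      exact ⟨w, rfl⟩
  have hnodup : (weylWords.map compG).Nodup := by
    rw [show compG = actG ∘ wordMat from funext compG_eq_actG, ← List.map_map]
    exact (show (weylWords.map wordMat).Nodup by decide).map actG_injective
  rw [hW', List.sum_toFinset _ hnodup, List.map_map]
  rfl

end WeylGroup

section PartitionFunction

lemma nonneg_of_mem_posG {x : VG} (hx : x ∈ posG) (j : Fin 2) : 0 ≤ x j := by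
  simp only [posG, mem_insert, mem_singleton] at hx
  rcases hx with rfl | rfl | rfl | rfl | rfl | rfl <;> fin_cases j <;> norm_num

lemma PG_eq_zero_of_neg {k : ℕ} {ν : VG} (j : Fin 2) (hν : ν j < 0) : PG k ν = 0 := by
  refine (congrArg Set.ncard (Set.eq_empty_of_forall_notMem ?_)).trans (Set.ncard_empty _)
  rintro m ⟨-, hm, rfl⟩
  rw [Pi.multiset_sum_apply] at hν
  exact hν.not_ge (Multiset.sum_nonneg fun y hy => by
    obtain ⟨x, hx, rfl⟩ := Multiset.mem_map.1 hy
    exact nonneg_of_mem_posG (hm x hx) j)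

lemma PG_succ_add_of_forced {β : VG} (hβ : β ∈ posG) (L : VG →+ ℚ)
    (hL : ∀ x ∈ posG, x ≠ β → L x ≤ 1) {k : ℕ} {ν : VG} (h : (k + 1 : ℚ) < L (ν + β)) :
    PG (k + 1) (ν + β) = PG k ν := by
  unfold PG
  rw [eq_comm, ← Set.ncard_image_of_injective _ fun _ _ => (Multiset.cons_inj_right β).1]
  congr 1
  ext m
  simp only [Set.mem_ofPred_eq, Set.mem_image]
  constructor
  · rintro ⟨m, ⟨hcard, hm, hsum⟩, rfl⟩
    refine ⟨by rw [Multiset.card_cons, hcard], ?_, by rw [Multiset.sum_cons, hsum, add_comm]⟩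
    intro x hx
    rcases Multiset.mem_cons.1 hx with rfl | hx
    exacts [hβ, hm x hx]
  · rintro ⟨hcard, hm, hsum⟩
    have hβm : β ∈ m := by
      by_contra hβm
      have hle : L m.sum ≤ Multiset.card m := by
        rw [map_multiset_sum]
        simpa using Multiset.sum_le_card_nsmul (m.map L) 1 (by
          simp only [Multiset.mem_map]
          rintro _ ⟨x, hx, rfl⟩
          exact hL x (hm x hx) (ne_of_mem_of_not_mem hx hβm))
      rw [hsum, hcard] at hle
      push_cast at hle
      linarith
    refine ⟨m.erase β, ⟨?_, fun x hx => hm x (Multiset.mem_of_mem_erase hx), ?_⟩,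
      Multiset.cons_erase hβm⟩
    · rw [Multiset.card_erase_of_mem hβm, hcard, Nat.pred_succ]
    · rw [← Multiset.cons_erase hβm, Multiset.sum_cons, add_comm] at hsum
      exact add_right_cancel hsum

lemma PG_add_nsmul_of_forced {β : VG} (hβ : β ∈ posG) (L : VG →+ ℚ)
    (hL : ∀ x ∈ posG, x ≠ β → L x ≤ 1) (hLβ : 1 < L β) {k : ℕ} {ν : VG} (hk : (k : ℚ) ≤ L ν)
    (n : ℕ) : PG (k + n) (ν + n • β) = PG k ν := by
  induction n with
  | zero => simp
  | succ n ih =>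
    rw [← ih, ← add_assoc, succ_nsmul, ← add_assoc]
    refine PG_succ_add_of_forced hβ L hL ?_
    rw [map_add, map_add, map_nsmul, nsmul_eq_mul]
    push_cast
    nlinarith [mul_nonneg (Nat.cast_nonneg (α := ℚ) n) (sub_nonneg.2 hLβ.le)]

/-- `(p, q, r, s)` are the multiplicities of `α₁+α₂, 2α₁+α₂, 3α₁+α₂, 3α₁+2α₂`; those of `α₁` and
`α₂` are then determined by `k` and the sum `n₀α₁ + n₁α₂`, and the two inequalities say that they
are nonnegative. -/
def kostantTuples (k : ℕ) (n₀ n₁ : ℤ) : Finset (ℕ × ℕ × ℕ × ℕ) :=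
  (range (k + 1) ×ˢ range (k + 1) ×ˢ range (k + 1) ×ˢ range (k + 1)).filter fun ⟨p, q, r, s⟩ =>
    (p + 2 * q + 3 * r + 4 * s + k : ℤ) = n₀ + n₁ ∧ (p + 2 * q + 3 * r + 3 * s : ℤ) ≤ n₀ ∧
      (p + q + r + 2 * s : ℤ) ≤ n₁

section Multiplicities

variable {m : Multiset VG} (hm : ∀ x ∈ m, x ∈ posG)
include hm

lemma card_eq_of_forall_mem_posG :
    Multiset.card m = m.count ![1, 0] + m.count ![0, 1] + m.count ![1, 1] + m.count ![2, 1] +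
      m.count ![3, 1] + m.count ![3, 2] := by
  rw [← Multiset.sum_count_eq_card hm]
  simp [posG, add_assoc]

lemma sum_eq_of_forall_mem_posG {n₀ n₁ : ℤ} (hsum : m.sum = ![(n₀ : ℚ), n₁]) :
    n₀ = m.count ![1, 0] + m.count ![1, 1] + 2 * m.count ![2, 1] + 3 * m.count ![3, 1] +
      3 * m.count ![3, 2] ∧
    n₁ = m.count ![0, 1] + m.count ![1, 1] + m.count ![2, 1] + m.count ![3, 1] +
      2 * m.count ![3, 2] := by
  rw [Finset.sum_multiset_count_of_subset m posG fun x hx => hm x (Multiset.mem_toFinset.1 hx)]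
    at hsum
  have h₀ := congrFun hsum 0
  have h₁ := congrFun hsum 1
  simp [posG] at h₀ h₁
  constructor <;> qify <;> linarith

end Multiplicities

lemma exists_multiset_of_mem_kostantTuples {k : ℕ} {n₀ n₁ : ℤ} {p q r s : ℕ}
    (he : (p, q, r, s) ∈ kostantTuples k n₀ n₁) :
    ∃ m : Multiset VG, (Multiset.card m = k ∧ (∀ x ∈ m, x ∈ posG) ∧ m.sum = ![(n₀ : ℚ), n₁]) ∧
      (m.count ![1, 1], m.count ![2, 1], m.count ![3, 1], m.count ![3, 2]) = (p, q, r, s) := by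
  simp only [kostantTuples, mem_filter, mem_product, mem_range] at he
  have hc₀ : ((n₀ - (p + 2 * q + 3 * r + 3 * s)).toNat : ℤ) = n₀ - (p + 2 * q + 3 * r + 3 * s) :=
    Int.toNat_of_nonneg (by omega)
  have hc₁ : ((n₁ - (p + q + r + 2 * s)).toNat : ℤ) = n₁ - (p + q + r + 2 * s) :=
    Int.toNat_of_nonneg (by omega)
  qify at hc₀ hc₁
  refine ⟨Multiset.replicate (n₀ - (p + 2 * q + 3 * r + 3 * s)).toNat ![1, 0] +
    Multiset.replicate (n₁ - (p + q + r + 2 * s)).toNat ![0, 1] + Multiset.replicate p ![1, 1] +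
    Multiset.replicate q ![2, 1] + Multiset.replicate r ![3, 1] + Multiset.replicate s ![3, 2],
    ⟨?_, ?_, ?_⟩, by simp [Multiset.count_replicate]⟩
  · simp only [Multiset.card_add, Multiset.card_replicate]
    omega
  · intro x hx
    simp only [Multiset.mem_add, Multiset.mem_replicate] at hx
    rcases hx with (((((⟨-, rfl⟩ | ⟨-, rfl⟩) | ⟨-, rfl⟩) | ⟨-, rfl⟩) | ⟨-, rfl⟩) | ⟨-, rfl⟩) <;>
      simp [posG]
  · ext j
    fin_cases j <;> simp [Multiset.sum_replicate] <;> linarith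

lemma PG_eq_card_kostantTuples (k : ℕ) (n₀ n₁ : ℤ) :
    PG k ![(n₀ : ℚ), n₁] = #(kostantTuples k n₀ n₁) := by
  rw [PG, ← Set.ncard_coe_finset]
  refine Set.ncard_congr
    (fun m _ => (m.count ![1, 1], m.count ![2, 1], m.count ![3, 1], m.count ![3, 2])) ?_ ?_ ?_
  · rintro m ⟨hcard, hm, hsum⟩
    have hk := card_eq_of_forall_mem_posG hm
    obtain ⟨h₀, h₁⟩ := sum_eq_of_forall_mem_posG hm hsum
    simp only [kostantTuples, coe_filter, mem_product, mem_range, Set.mem_ofPred_eq]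
    omega
  · rintro m m' ⟨hcard, hm, hsum⟩ ⟨hcard', hm', hsum'⟩ h
    simp only [Prod.mk.injEq] at h
    have hk := card_eq_of_forall_mem_posG hm
    have hk' := card_eq_of_forall_mem_posG hm'
    obtain ⟨h₀, h₁⟩ := sum_eq_of_forall_mem_posG hm hsum
    obtain ⟨h₀', h₁'⟩ := sum_eq_of_forall_mem_posG hm' hsum'
    ext x
    by_cases hx : x ∈ posG
    · simp only [posG, mem_insert, mem_singleton] at hx
      rcases hx with rfl | rfl | rfl | rfl | rfl | rfl <;> omega
    · rw [Multiset.count_eq_zero.2 fun h => hx (hm x h),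
        Multiset.count_eq_zero.2 fun h => hx (hm' x h)]
  · rintro ⟨p, q, r, s⟩ he
    obtain ⟨m, hm, hcount⟩ := exists_multiset_of_mem_kostantTuples he
    exact ⟨m, hm, hcount⟩

end PartitionFunction

section LatticePoints

def triples (n : ℕ) : Finset (ℕ × ℕ × ℕ) := range (n + 1) ×ˢ range (n + 1) ×ˢ range (n + 1)

lemma card_kostantTuples_two_mul (n : ℕ) :
    #(kostantTuples n (2 * n) n) =
      #(kostantTuples n (2 * n) (n - 1)) + #{t ∈ triples n | t.1 + 3 * t.2.1 + 2 * t.2.2 = n} := by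
  rw [← card_filter_add_card_filter_not (s := kostantTuples n (2 * n) n) fun e => 0 < e.1]
  congr 1
  · refine card_nbij' (fun e => (e.1 - 1, e.2)) (fun e => (e.1 + 1, e.2)) ?_ ?_ ?_ ?_ <;>
    · simp only [Set.MapsTo, Set.LeftInvOn, Set.RightInvOn, Prod.forall, kostantTuples, coe_filter,
        mem_filter, mem_product, mem_range, Set.mem_ofPred_eq]
      grind
  · refine card_nbij' (fun e => (e.2.1, e.2.2.1 / 2, e.2.2.2)) (fun t => (0, t.1, 2 * t.2.1, t.2.2))
      ?_ ?_ ?_ ?_ <;>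
    · simp only [Set.MapsTo, Set.LeftInvOn, Set.RightInvOn, Prod.forall, kostantTuples, triples,
        coe_filter, mem_filter, mem_product, mem_range, Set.mem_ofPred_eq]
      grind

lemma card_kostantTuples_sub_two (n : ℕ) :
    #(kostantTuples n (n - 2) n) =
      #(kostantTuples n (n - 5) (n - 1)) +
        #{t ∈ triples n | t.1 + 2 * t.2.1 + 3 * t.2.2 + 2 = n} := by
  rw [← card_filter_add_card_filter_not (s := kostantTuples n (n - 2) n) fun e => 0 < e.2.2.2]
  congr 1
  · refine card_nbij' (fun e => (e.1, e.2.1, e.2.2.1, e.2.2.2 - 1))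
      (fun e => (e.1, e.2.1, e.2.2.1, e.2.2.2 + 1)) ?_ ?_ ?_ ?_ <;>
    · simp only [Set.MapsTo, Set.LeftInvOn, Set.RightInvOn, Prod.forall, kostantTuples, coe_filter,
        mem_filter, mem_product, mem_range, Set.mem_ofPred_eq]
      grind
  · refine card_nbij' (fun e => (e.1, e.2.1, e.2.2.1)) (fun t => (t.1, t.2.1, t.2.2, 0))
      ?_ ?_ ?_ ?_ <;>
    · simp only [Set.MapsTo, Set.LeftInvOn, Set.RightInvOn, Prod.forall, kostantTuples, triples,
        coe_filter, mem_filter, mem_product, mem_range, Set.mem_ofPred_eq]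
      grind

lemma card_triples_one_three_two (n : ℕ) :
    #{t ∈ triples n | t.1 + 3 * t.2.1 + 2 * t.2.2 = n} =
      #{t ∈ triples n | t.1 + 2 * t.2.1 + 3 * t.2.2 + 2 = n} + (n / 3 + 1) := by
  rw [← card_filter_add_card_filter_not
      (s := {t ∈ triples n | t.1 + 3 * t.2.1 + 2 * t.2.2 = n}) fun t => 0 < t.2.2,
    ← card_range (n / 3 + 1)]
  congr 1
  · refine card_nbij' (fun t => (t.1, t.2.2 - 1, t.2.1)) (fun t => (t.1, t.2.2, t.2.1 + 1))
      ?_ ?_ ?_ ?_ <;>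
    · simp only [Set.MapsTo, Set.LeftInvOn, Set.RightInvOn, Prod.forall, triples, coe_filter,
        mem_filter, mem_product, mem_range, Set.mem_ofPred_eq]
      grind
  · refine card_nbij' (fun t => t.2.1) (fun y => (n - 3 * y, y, 0)) ?_ ?_ ?_ ?_ <;>
    · simp only [Set.MapsTo, Set.LeftInvOn, Set.RightInvOn, Prod.forall, triples, coe_filter,
        mem_filter, mem_product, mem_range, Set.mem_ofPred_eq, coe_range, Set.mem_Iio]
      grind

end LatticePoints

section DotAction

lemma ρG_eq : ρG = ![5, 3] := by
  ext j
  fin_cases j <;> norm_num [ρG, posG]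

/-- `u·λ - ω₁` for `λ = aω₁ + bω₂`. -/
def dotWeight (a b : ℕ) (u : VG → VG) : VG := u ((a : ℚ) • ω₁G + (b : ℚ) • ω₂G + ρG) - ρG - ω₁G

lemma dotWeight_compG (a b : ℕ) (l : List (Fin 2)) :
    dotWeight a b (compG l) =
      ![(wordMat l 0 0 : ℚ) * (2 * a + 3 * b + 5) + wordMat l 0 1 * (a + 2 * b + 3) - 7,
        (wordMat l 1 0 : ℚ) * (2 * a + 3 * b + 5) + wordMat l 1 1 * (a + 2 * b + 3) - 4] := by
  ext j
  fin_cases j <;>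
    simp [dotWeight, compG_eq_actG, actG, ρG_eq, ω₁G, ω₂G] <;> ring

lemma PG_dotWeight_eq_zero {a b : ℕ} (hb : b ≤ 2) (k : ℕ) {l : List (Fin 2)}
    (hl : l ∈ weylWords.drop 4) :
    PG k (dotWeight a b (compG l)) = 0 := by
  have hb' : (b : ℚ) ≤ 2 := by exact_mod_cast hb
  have ha : (0 : ℚ) ≤ a := a.cast_nonneg
  have hb₀ : (0 : ℚ) ≤ b := b.cast_nonneg
  simp only [weylWords, List.drop_succ_cons, List.drop_zero, List.mem_cons, List.not_mem_nil,
    or_false] at hl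
  rcases hl with rfl | rfl | rfl | rfl | rfl | rfl | rfl | rfl <;>
  first
  | exact PG_eq_zero_of_neg 0 (by simp [dotWeight_compG, wordMat, reflMat]; linarith)
  | exact PG_eq_zero_of_neg 1 (by simp [dotWeight_compG, wordMat, reflMat]; linarith)

lemma sum_weylWords_eq (a b k : ℕ) (hb : b ≤ 2) :
    (weylWords.map fun l => (-1 : ℤ) ^ lenG (compG l) * (PG k (dotWeight a b (compG l)) : ℤ)).sum =
      PG k (dotWeight a b (compG [])) - PG k (dotWeight a b (compG [0])) -
        PG k (dotWeight a b (compG [1])) + PG k (dotWeight a b (compG [0, 1])) := by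
  simp [weylWords, neg_one_pow_lenG_compG, det_wordMat, PG_dotWeight_eq_zero hb]
  ring

lemma PG_dotWeight_one (n b : ℕ) :
    PG (n + b) (dotWeight (n + 1) b (compG [])) = #(kostantTuples n (2 * n) n) := by
  have hv : dotWeight (n + 1) b (compG []) = ![((2 * n : ℤ) : ℚ), (n : ℤ)] + b • ![3, 2] := by
    rw [dotWeight_compG]
    ext j
    fin_cases j <;> simp [wordMat] <;> ring
  rw [hv, PG_add_nsmul_of_forced (by simp [posG]) (Pi.evalAddMonoidHom (fun _ => ℚ) 1)
    (by simp [posG]) (by simp) (by simp), PG_eq_card_kostantTuples]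

lemma PG_dotWeight_s₁ (n b : ℕ) :
    PG (n + b) (dotWeight (n + 1) b (compG [0])) = #(kostantTuples n (n - 2) n) := by
  have hv : dotWeight (n + 1) b (compG [0]) = ![((n - 2 : ℤ) : ℚ), (n : ℤ)] + b • ![3, 2] := by
    rw [dotWeight_compG]
    ext j
    fin_cases j <;> simp [wordMat, reflMat] <;> ring
  rw [hv, PG_add_nsmul_of_forced (by simp [posG]) (Pi.evalAddMonoidHom (fun _ => ℚ) 1)
    (by simp [posG]) (by simp) (by simp), PG_eq_card_kostantTuples]

lemma PG_dotWeight_s₂ (n b : ℕ) :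
    PG (n + b) (dotWeight (n + 1) b (compG [1])) = #(kostantTuples n (2 * n) (n - 1)) := by
  have hv :
      dotWeight (n + 1) b (compG [1]) = ![((2 * n : ℤ) : ℚ), ((n - 1 : ℤ) : ℚ)] + b • ![3, 1] := by
    rw [dotWeight_compG]
    ext j
    fin_cases j <;> simp [wordMat, reflMat] <;> ring
  rw [hv, PG_add_nsmul_of_forced (by simp [posG])
    (Pi.evalAddMonoidHom (fun _ => ℚ) 0 - Pi.evalAddMonoidHom (fun _ => ℚ) 1)
    (by norm_num [posG]) (by norm_num) (by simp; linarith), PG_eq_card_kostantTuples]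

lemma PG_dotWeight_s₁s₂ (n b : ℕ) :
    PG (n + b) (dotWeight (n + 1) b (compG [0, 1])) = #(kostantTuples n (n - 5) (n - 1)) := by
  have hv :
      dotWeight (n + 1) b (compG [0, 1]) = ![((n - 5 : ℤ) : ℚ), ((n - 1 : ℤ) : ℚ)] + b • ![0, 1] := by
    rw [dotWeight_compG]
    ext j
    fin_cases j <;> simp [wordMat, reflMat] <;> ring
  rw [hv, PG_add_nsmul_of_forced (by simp [posG])
    (2 • Pi.evalAddMonoidHom (fun _ => ℚ) 1 - Pi.evalAddMonoidHom (fun _ => ℚ) 0)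
    (by norm_num [posG]) (by norm_num) (by simp; linarith), PG_eq_card_kostantTuples]

end DotAction

theorem statement17 (W : Finset (VG → VG))
    (hW : ∀ u, u ∈ W ↔ ∃ l : List (Fin 2), u = compG l)
    (a b : ℕ) (ha : 1 ≤ a) (hb : b ≤ 2) :
    ∑ u ∈ W, (-1 : ℤ) ^ lenG u *
      (PG (a + b - 1) (u ((a : ℚ) • ω₁G + (b : ℚ) • ω₂G + ρG) - ρG - ω₁G) : ℤ) =
      ⌈(a : ℚ) / 3⌉ := by
  have hceil := Rat.ceil_natCast_div_natCast a 3
  push_cast at hceil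
  obtain ⟨n, rfl⟩ : ∃ n, a = n + 1 := ⟨a - 1, by omega⟩
  rw [show n + 1 + b - 1 = n + b by omega]
  change ∑ u ∈ W, (-1 : ℤ) ^ lenG u * (PG (n + b) (dotWeight (n + 1) b u) : ℤ) = _
  rw [sum_eq_sum_weylWords W hW, sum_weylWords_eq _ _ _ hb, PG_dotWeight_one, PG_dotWeight_s₁,
    PG_dotWeight_s₂, PG_dotWeight_s₁s₂, card_kostantTuples_two_mul, card_kostantTuples_sub_two,
    card_triples_one_three_two, hceil]
  push_cast
  omega

end
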